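/- Assume M > 0, let Λ : (0, +∞) → (M, +∞) be the inverse of the (strictly decreasing, surjective) function L, and set 𝓕(ℓ) = F(Λ(ℓ)) for ℓ > 0. Then 𝓕″(ℓ) = −Λ′(ℓ)/Λ(ℓ)² for every ℓ > 0, lim_{ℓ→0⁺} 𝓕″(ℓ) = 1/(2S), and lim_{ℓ→+∞} 𝓕″(ℓ) = 0. -/

import Mathlib

/-!
Differentiating under the integral sign gives `L' = -I` and `F' = -J`, where
`I λ = ∫ (λ - C)⁻²` and `J λ = ∫ c (λ - C)⁻²`. By the Pythagorean identity the derivative of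
`Σ / (λ - C)` is `(λ c - 1) / (λ - C)²`; its integral over a period vanishes, so `I = λ J`.
Hence `𝓕' = F'(Λ) Λ' = J(Λ) / I(Λ) = 1 / Λ` and `𝓕'' = -Λ' / Λ² = 1 / (Λ² I(Λ))`.
As `ℓ → 0⁺`, `Λ → ∞` and `Λ² I(Λ) → 2S` by dominated convergence. As `ℓ → ∞`, Cauchy–Schwarz
gives `2S · I(Λ) ≥ L(Λ)² = ℓ²`, so `Λ² I(Λ) ≥ M² ℓ² / (2S) → ∞`.
-/

open MeasureTheory Filter Set Topology

theorem Function.Periodic.le_of_isGreatest_image_Icc {C : ℝ → ℝ} {p M : ℝ}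
    (hC : Function.Periodic C p) (hp : 0 < p) (hM : IsGreatest (C '' Icc 0 p) M) (θ : ℝ) :
    C θ ≤ M := by
  obtain ⟨y, hy, hCy⟩ := hC.exists_mem_Ico₀ hp θ
  exact hCy ▸ hM.2 ⟨y, Ico_subset_Icc_self hy, rfl⟩

section KernelIntegrals

variable {a b l M B ε : ℝ} {C c : ℝ → ℝ}

theorem abs_div_sub_pow_le (hcB : ∀ θ, |c θ| ≤ B) (hε : 0 < ε)
    (hεC : ∀ θ, ε ≤ l - C θ) (n : ℕ) (θ : ℝ) : |c θ / (l - C θ) ^ n| ≤ B / ε ^ n := by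
  have hB : 0 ≤ B := (abs_nonneg _).trans (hcB 0)
  rw [abs_div, abs_of_pos (pow_pos (hε.trans_le (hεC θ)) n)]
  exact div_le_div₀ hB (hcB θ) (pow_pos hε n) (pow_le_pow_left₀ hε.le (hεC θ) n)

theorem intervalIntegrable_div_sub_pow (hC : Measurable C) (hCM : ∀ θ, C θ ≤ M)
    (hc : Measurable c) (hcB : ∀ θ, |c θ| ≤ B) (hl : M < l) (n : ℕ) :
    IntervalIntegrable (fun θ => c θ / (l - C θ) ^ n) volume a b := by
  refine (intervalIntegrable_const (c := B / (l - M) ^ n)).mono_fun'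
    (hc.div ((measurable_const.sub hC).pow_const n)).aestronglyMeasurable.restrict
    (ae_of_all _ fun θ => ?_)
  exact abs_div_sub_pow_le hcB (sub_pos.2 hl) (fun θ => by linarith [hCM θ]) n θ

theorem integral_one_div_sub_pow_pos (hab : a < b) (hC : Measurable C)
    (hCM : ∀ θ, C θ ≤ M) (hl : M < l) (n : ℕ) : 0 < ∫ θ in a..b, 1 / (l - C θ) ^ n :=
  intervalIntegral.intervalIntegral_pos_of_pos_on
    (intervalIntegrable_div_sub_pow hC hCM measurable_const (fun _ => abs_one.le) hl n)
    (fun θ _ => one_div_pos.2 (pow_pos (by linarith [hCM θ]) n)) hab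

theorem hasDerivAt_integral_div_sub (hC : Measurable C) (hCM : ∀ θ, C θ ≤ M)
    (hc : Measurable c) (hcB : ∀ θ, |c θ| ≤ B) (hl : M < l) :
    HasDerivAt (fun x => ∫ θ in a..b, c θ / (x - C θ))
      (-∫ θ in a..b, c θ / (l - C θ) ^ 2) l := by
  set ε := (l - M) / 2 with hε_def
  have hε : 0 < ε := by linarith
  have hball : ∀ x ∈ Metric.ball l ε, ∀ θ, ε ≤ x - C θ := by
    intro x hx θ
    rw [Metric.mem_ball, Real.dist_eq, abs_lt] at hx
    linarith [hCM θ]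
  have hderiv : ∀ θ, ∀ x ∈ Metric.ball l ε,
      HasDerivAt (fun x => c θ / (x - C θ)) (-(c θ / (x - C θ) ^ 2)) x := by
    intro θ x hx
    have hne : x - C θ ≠ 0 := (hε.trans_le (hball x hx θ)).ne'
    have h := (((hasDerivAt_id x).sub_const (C θ)).inv hne).const_mul (c θ)
    simp only [Pi.inv_apply, id] at h
    exact h.congr_deriv (by ring)
  have H := intervalIntegral.hasDerivAt_integral_of_dominated_loc_of_deriv_le
    (F := fun x θ => c θ / (x - C θ)) (F' := fun x θ => -(c θ / (x - C θ) ^ 2))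
    (bound := fun _ => B / ε ^ 2) (Metric.ball_mem_nhds l hε)
    (Eventually.of_forall fun x =>
      (hc.div (measurable_const.sub hC)).aestronglyMeasurable.restrict)
    (by simpa using intervalIntegrable_div_sub_pow (a := a) (b := b) hC hCM hc hcB hl 1)
    (hc.div ((measurable_const.sub hC).pow_const 2)).neg.aestronglyMeasurable.restrict
    (ae_of_all _ fun θ _ x hx => by
      rw [norm_neg, Real.norm_eq_abs]
      exact abs_div_sub_pow_le hcB hε (hball x hx) 2 θ)
    intervalIntegrable_const (ae_of_all _ fun θ _ => hderiv θ)
  simpa only [intervalIntegral.integral_neg] using H.2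

theorem LipschitzWith.inv_const_sub {K : NNReal} (hC : LipschitzWith K C)
    (hCM : ∀ θ, C θ ≤ M) (hl : M < l) :
    LipschitzWith (K / (l - M) ^ 2).toNNReal fun θ => (l - C θ)⁻¹ := by
  refine LipschitzWith.of_dist_le' fun x y => ?_
  have hM : 0 < l - M := sub_pos.2 hl
  have hx : l - M ≤ l - C x := by linarith [hCM x]
  have hy : l - M ≤ l - C y := by linarith [hCM y]
  have hxy : 0 < (l - C x) * (l - C y) := mul_pos (hM.trans_le hx) (hM.trans_le hy)
  rw [Real.dist_eq, inv_sub_inv (hM.trans_le hx).ne' (hM.trans_le hy).ne', abs_div,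
    abs_of_pos hxy, sub_sub_sub_cancel_left, ← Real.dist_eq, div_mul_eq_mul_div,
    div_le_div_iff₀ hxy (by positivity)]
  calc dist (C x) (C y) * (l - M) ^ 2 ≤ (K * dist x y) * ((l - C x) * (l - C y)) := by
        gcongr
        · exact hC.dist_le_mul x y
        · rw [sq]; exact mul_le_mul hx hy hM.le (hM.le.trans hx)
    _ = _ := by ring

theorem integral_one_div_sub_sq_eq_mul_integral {Sg s : ℝ → ℝ} {KC KS : NNReal}
    (hC : LipschitzWith KC C) (hSg : LipschitzWith KS Sg) (hCab : C a = C b)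
    (hSgab : Sg a = Sg b) (hc : Measurable c) (hcB : ∀ θ, |c θ| ≤ B)
    (hconv : ∀ᵐ θ, HasDerivAt C (-s θ) θ ∧ HasDerivAt Sg (c θ) θ ∧ c θ * C θ + s θ * Sg θ = 1)
    (hCM : ∀ θ, C θ ≤ M) (hl : M < l) :
    ∫ θ in a..b, 1 / (l - C θ) ^ 2 = l * ∫ θ in a..b, c θ / (l - C θ) ^ 2 := by
  have hparts := AbsolutelyContinuousOnInterval.integral_deriv_mul_eq_sub
    (hSg.lipschitzOnWith (s := uIcc a b)).absolutelyContinuousOnInterval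
    ((hC.inv_const_sub hCM hl).lipschitzOnWith (s := uIcc a b)).absolutelyContinuousOnInterval
  rw [hCab, hSgab, sub_self] at hparts
  have hintegrand : ∀ᵐ θ, θ ∈ uIoc a b →
      deriv Sg θ * (l - C θ)⁻¹ + Sg θ * deriv (fun θ => (l - C θ)⁻¹) θ
        = l * (c θ / (l - C θ) ^ 2) - 1 / (l - C θ) ^ 2 := by
    filter_upwards [hconv] with θ ⟨hCθ, hSgθ, hpyth⟩ _
    have hne : l - C θ ≠ 0 := by linarith [hCM θ]
    have hinv : HasDerivAt (fun θ => (l - C θ)⁻¹) (-(-(-s θ)) / (l - C θ) ^ 2) θ :=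
      (hCθ.const_sub l).inv hne
    rw [hSgθ.deriv, hinv.deriv]
    field_simp
    linear_combination -hpyth
  have hCmeas := hC.continuous.measurable
  rw [intervalIntegral.integral_congr_ae hintegrand, intervalIntegral.integral_sub
    ((intervalIntegrable_div_sub_pow hCmeas hCM hc hcB hl 2).const_mul l)
    (intervalIntegrable_div_sub_pow hCmeas hCM measurable_const (fun _ => abs_one.le) hl 2),
    intervalIntegral.integral_const_mul] at hparts
  linarith

theorem intervalIntegral.sq_integral_le_mul_integral_sq {f : ℝ → ℝ} (hab : a < b)
    (hf : IntervalIntegrable f volume a b)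
    (hf2 : IntervalIntegrable (fun x => f x ^ 2) volume a b) :
    (∫ x in a..b, f x) ^ 2 ≤ (b - a) * ∫ x in a..b, f x ^ 2 := by
  set t := (∫ x in a..b, f x) / (b - a)
  have hba : 0 < b - a := sub_pos.2 hab
  -- integrate `2 t f - t² ≤ f²`, where `t` is the mean value of `f`
  have h := intervalIntegral.integral_mono_on hab.le ((hf.const_mul (2 * t)).sub
    (intervalIntegrable_const (c := t ^ 2))) hf2 fun x _ => by nlinarith [sq_nonneg (f x - t)]
  rw [intervalIntegral.integral_sub (hf.const_mul (2 * t)) intervalIntegrable_const,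
    intervalIntegral.integral_const_mul, intervalIntegral.integral_const, smul_eq_mul] at h
  have ht : (∫ x in a..b, f x) = t * (b - a) := (div_mul_cancel₀ _ hba.ne').symm
  rw [ht] at h ⊢
  nlinarith

theorem sq_mul_sq_integral_one_div_sub_le (hab : a < b) (hC : Measurable C)
    (hCM : ∀ θ, C θ ≤ M) (hM : 0 ≤ M) (hl : M < l) :
    M ^ 2 * (∫ θ in a..b, 1 / (l - C θ)) ^ 2
      ≤ (b - a) * (l ^ 2 * ∫ θ in a..b, 1 / (l - C θ) ^ 2) := by
  have hint := fun n => intervalIntegrable_div_sub_pow (a := a) (b := b) hC hCM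
    measurable_const (fun _ => abs_one.le) hl n
  have hCS := intervalIntegral.sq_integral_le_mul_integral_sq hab (f := fun θ => 1 / (l - C θ))
    (by simpa using hint 1) (by simpa only [div_pow, one_pow] using hint 2)
  simp only [div_pow, one_pow] at hCS
  calc M ^ 2 * (∫ θ in a..b, 1 / (l - C θ)) ^ 2
      ≤ l ^ 2 * ((b - a) * ∫ θ in a..b, 1 / (l - C θ) ^ 2) :=
        mul_le_mul (pow_le_pow_left₀ hM hl.le 2) hCS (sq_nonneg _) (sq_nonneg _)
    _ = _ := by ring

theorem tendsto_sq_mul_integral_one_div_sub_sq (hC : Measurable C) (hCM : ∀ θ, C θ ≤ M) :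
    Tendsto (fun l => l ^ 2 * ∫ θ in a..b, 1 / (l - C θ) ^ 2) atTop (𝓝 (b - a)) := by
  have hint : ∀ l, l ^ 2 * ∫ θ in a..b, 1 / (l - C θ) ^ 2
      = ∫ θ in a..b, (l / (l - C θ)) ^ 2 := by
    intro l
    rw [← intervalIntegral.integral_const_mul]
    simp only [div_pow, mul_one_div]
  simp only [hint]
  have hlim : ∀ θ, Tendsto (fun l => (l / (l - C θ)) ^ 2) atTop (𝓝 1) := by
    intro θ
    have h : Tendsto (fun l => 1 + C θ / (l - C θ)) atTop (𝓝 (1 + 0)) :=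
      tendsto_const_nhds.add (tendsto_const_nhds.div_atTop
        (tendsto_atTop_add_const_right _ _ tendsto_id))
    rw [add_zero] at h
    simpa using (h.pow 2).congr' <| (eventually_gt_atTop (C θ)).mono fun l hl => by
      rw [one_add_div (sub_pos.2 hl).ne', sub_add_cancel]
  have hbound : ∀ᶠ l in atTop, ∀ θ, ‖(l / (l - C θ)) ^ 2‖ ≤ 4 := by
    filter_upwards [eventually_ge_atTop (2 * M), eventually_gt_atTop 0] with l hlM hl θ
    have hhalf : l / 2 ≤ l - C θ := by linarith [hCM θ]
    have h2 : l / (l - C θ) ≤ 2 := by rw [div_le_iff₀ (by linarith)]; linarith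
    have h0 : 0 ≤ l / (l - C θ) := div_nonneg hl.le (by linarith)
    rw [Real.norm_eq_abs, abs_of_nonneg (sq_nonneg _)]
    nlinarith
  simpa using intervalIntegral.tendsto_integral_filter_of_dominated_convergence
    (μ := volume) (fun _ => 4)
    (Eventually.of_forall fun l =>
      ((measurable_const.div (measurable_const.sub hC)).pow_const 2).aestronglyMeasurable)
    (hbound.mono fun l hl => ae_of_all _ fun θ _ => hl θ) intervalIntegrable_const
    (ae_of_all _ fun θ _ => hlim θ)

end KernelIntegrals

theorem strictAntiOn_of_hasDerivAt_neg {D : Set ℝ} {f f' : ℝ → ℝ} (hD : Convex ℝ D)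
    (hDo : IsOpen D) (hf : ∀ x ∈ D, HasDerivAt f (f' x) x) (hf' : ∀ x ∈ D, f' x < 0) :
    StrictAntiOn f D :=
  strictAntiOn_of_hasDerivWithinAt_neg hD
    (fun x hx => (hf x hx).continuousAt.continuousWithinAt)
    (by rw [hDo.interior_eq]; exact fun x hx => (hf x hx).hasDerivWithinAt)
    (by rwa [hDo.interior_eq])

section RightInverse

variable {L Λ : ℝ → ℝ} {s t : Set ℝ}

theorem StrictAntiOn.strictAntiOn_of_rightInvOn (hL : StrictAntiOn L s)
    (hΛ : MapsTo Λ t s) (hinv : RightInvOn Λ L t) : StrictAntiOn Λ t := fun x hx y hy hxy =>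
  (hL.lt_iff_gt (hΛ hx) (hΛ hy)).1 (by rwa [hinv hx, hinv hy])

theorem AntitoneOn.continuousAt_of_image_mem_nhds {x : ℝ} (hΛ : AntitoneOn Λ t)
    (ht : t ∈ 𝓝 x) (himage : Λ '' t ∈ 𝓝 (Λ x)) : ContinuousAt Λ x :=
  continuousAt_of_monotoneOn_of_image_mem_nhds (f := OrderDual.toDual ∘ Λ) hΛ.dual_right ht
    himage

theorem Set.InvOn.hasDerivAt_of_antitoneOn {L' x : ℝ} (hinv : InvOn Λ L s t)
    (hL : MapsTo L s t) (hΛ : MapsTo Λ t s) (hΛanti : AntitoneOn Λ t) (hs : IsOpen s)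
    (ht : IsOpen t) (hx : x ∈ t) (hLd : HasDerivAt L L' (Λ x)) (hL' : L' ≠ 0) :
    HasDerivAt Λ L'⁻¹ x := by
  have himage : Λ '' t = s := (hinv.symm.bijOn hΛ hL).image_eq
  refine hLd.of_local_left_inverse ?_ hL' (eventually_of_mem (ht.mem_nhds hx) hinv.2)
  exact hΛanti.continuousAt_of_image_mem_nhds (ht.mem_nhds hx) (himage ▸ hs.mem_nhds (hΛ hx))

theorem AntitoneOn.tendsto_nhdsGT_atTop {a : ℝ} (hΛ : AntitoneOn Λ (Ioi a))
    (hunbdd : ∀ b, ∃ x > a, b ≤ Λ x) : Tendsto Λ (𝓝[>] a) atTop := by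
  refine tendsto_atTop.2 fun b => ?_
  obtain ⟨x, hx, hb⟩ := hunbdd b
  filter_upwards [Ioo_mem_nhdsGT hx] with y hy
  exact hb.trans (hΛ hy.1 hx hy.2.le)

end RightInverse

theorem HasDerivAt.comp_of_hasDerivAt_div {F Λ G : ℝ → ℝ} {L' x : ℝ}
    (hF : HasDerivAt F (L' / Λ x) (Λ x)) (hΛ : HasDerivAt Λ L'⁻¹ x) (hL' : L' ≠ 0)
    (hG : ∀ᶠ y in 𝓝 x, G y = F (Λ y)) : HasDerivAt G (Λ x)⁻¹ x := by
  refine ((hF.comp x hΛ).congr_of_eventuallyEq hG).congr_deriv ?_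
  rw [div_mul_eq_mul_div, mul_inv_cancel₀ hL', one_div]

theorem stmt13_general
    (S : ℝ) (hS : 0 < S)
    (C Sg c s : ℝ → ℝ)
    (hC_lip : ∃ K : NNReal, LipschitzWith K C)
    (hSg_lip : ∃ K : NNReal, LipschitzWith K Sg)
    (hC_per : Function.Periodic C (2 * S))
    (hSg_per : Function.Periodic Sg (2 * S))
    (hc_meas : Measurable c)
    (hc_bdd : ∃ B : ℝ, ∀ θ, |c θ| ≤ B)
    (hconv : ∀ᵐ θ ∂(volume : Measure ℝ), HasDerivAt C (-(s θ)) θ ∧ HasDerivAt Sg (c θ) θ ∧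
      c θ * C θ + s θ * Sg θ = 1)
    (M : ℝ) (hM : IsGreatest (C '' Set.Icc 0 (2 * S)) M)
    (L F : ℝ → ℝ)
    (hL : ∀ l : ℝ, M < l → L l = ∫ θ in (0:ℝ)..(2*S), 1 / (l - C θ))
    (hF : ∀ l : ℝ, M < l → F l = ∫ θ in (0:ℝ)..(2*S), c θ / (l - C θ))
    (hM0 : 0 < M)
    (Λ : ℝ → ℝ)
    (hΛmem : ∀ x : ℝ, 0 < x → M < Λ x)
    (hΛright : ∀ x : ℝ, 0 < x → L (Λ x) = x)
    (hΛleft : ∀ l : ℝ, M < l → Λ (L l) = l)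
    (G : ℝ → ℝ) (hG : ∀ x : ℝ, 0 < x → G x = F (Λ x)) :
    (∀ x : ℝ, 0 < x → deriv (deriv G) x = -(deriv Λ x) / (Λ x) ^ 2) ∧
    Tendsto (deriv (deriv G)) (𝓝[>] (0:ℝ)) (𝓝 (1 / (2 * S))) ∧
    Tendsto (deriv (deriv G)) atTop (𝓝 0) := by
  obtain ⟨KC, hKC⟩ := hC_lip
  obtain ⟨KS, hKS⟩ := hSg_lip
  obtain ⟨B, hB⟩ := hc_bdd
  have h2S : 0 < 2 * S := by linarith
  have hCM : ∀ θ, C θ ≤ M := hC_per.le_of_isGreatest_image_Icc h2S hM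
  have hCmeas : Measurable C := hKC.continuous.measurable
  set I : ℝ → ℝ := fun l => ∫ θ in (0:ℝ)..(2 * S), 1 / (l - C θ) ^ 2
  have hIpos : ∀ l, M < l → 0 < I l := fun l hl =>
    integral_one_div_sub_pow_pos h2S hCmeas hCM hl 2
  have hLpos : MapsTo L (Ioi M) (Ioi 0) := fun l hl => by
    simpa [hL l hl] using integral_one_div_sub_pow_pos h2S hCmeas hCM hl 1
  have hLd : ∀ l, M < l → HasDerivAt L (-I l) l := fun l hl =>
    (hasDerivAt_integral_div_sub hCmeas hCM measurable_const (fun _ => abs_one.le) hl)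
      |>.congr_of_eventuallyEq (eventually_gt_nhds hl |>.mono hL)
  have hFd : ∀ l, M < l → HasDerivAt F (-I l / l) l := fun l hl => by
    have hI : I l = _ := integral_one_div_sub_sq_eq_mul_integral hKC hKS
      (by simpa using (hC_per 0).symm) (by simpa using (hSg_per 0).symm) hc_meas hB hconv hCM hl
    rw [hI, neg_div, mul_div_cancel_left₀ _ (by linarith : l ≠ 0)]
    exact (hasDerivAt_integral_div_sub hCmeas hCM hc_meas hB hl).congr_of_eventuallyEq
      (eventually_gt_nhds hl |>.mono hF)
  have hΛanti : StrictAntiOn Λ (Ioi 0) :=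
    (strictAntiOn_of_hasDerivAt_neg (convex_Ioi M) isOpen_Ioi hLd fun l hl =>
      neg_lt_zero.2 (hIpos l hl)).strictAntiOn_of_rightInvOn hΛmem hΛright
  have hΛd : ∀ x, 0 < x → HasDerivAt Λ (-I (Λ x))⁻¹ x := fun x hx =>
    InvOn.hasDerivAt_of_antitoneOn ⟨hΛleft, hΛright⟩ hLpos hΛmem hΛanti.antitoneOn isOpen_Ioi
      isOpen_Ioi hx (hLd _ (hΛmem x hx)) (neg_ne_zero.2 (hIpos _ (hΛmem x hx)).ne')
  have hG' : ∀ x, 0 < x → HasDerivAt G (Λ x)⁻¹ x := fun x hx =>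
    (hFd _ (hΛmem x hx)).comp_of_hasDerivAt_div (hΛd x hx)
      (neg_ne_zero.2 (hIpos _ (hΛmem x hx)).ne') (eventually_gt_nhds hx |>.mono hG)
  have hG'' : ∀ x, 0 < x → HasDerivAt (deriv G) (-(deriv Λ x) / Λ x ^ 2) x := fun x hx => by
    rw [(hΛd x hx).deriv]
    exact ((hΛd x hx).inv (by linarith [hΛmem x hx])).congr_of_eventuallyEq
      ((eventually_gt_nhds hx).mono fun y hy => (hG' y hy).deriv)
  have hformula : ∀ x, 0 < x → deriv (deriv G) x = (Λ x ^ 2 * I (Λ x))⁻¹ := fun x hx => by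
    rw [(hG'' x hx).deriv, (hΛd x hx).deriv]
    field_simp
  refine ⟨fun x hx => (hG'' x hx).deriv, ?_, ?_⟩
  · have hΛtop : Tendsto Λ (𝓝[>] 0) atTop := hΛanti.antitoneOn.tendsto_nhdsGT_atTop fun b =>
      ⟨L (max b (M + 1)), hLpos (lt_max_of_lt_right (lt_add_one M)),
        by rw [hΛleft _ (lt_max_of_lt_right (lt_add_one M))]; exact le_max_left _ _⟩
    have hlim := tendsto_sq_mul_integral_one_div_sub_sq (a := 0) (b := 2 * S) hCmeas hCM
    rw [sub_zero] at hlim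
    replace hlim := (hlim.inv₀ h2S.ne').comp hΛtop
    rw [← one_div] at hlim
    exact hlim.congr' (eventually_mem_nhdsWithin.mono fun x hx => (hformula x hx).symm)
  · have hgrowth : Tendsto (fun x => Λ x ^ 2 * I (Λ x)) atTop atTop := by
      refine tendsto_atTop_mono' _ ?_ ((tendsto_pow_atTop two_ne_zero).const_mul_atTop
        (by positivity : 0 < M ^ 2 / (2 * S)))
      filter_upwards [eventually_gt_atTop 0] with x hx
      have h := sq_mul_sq_integral_one_div_sub_le h2S hCmeas hCM hM0.le (hΛmem x hx)
      rw [← hL _ (hΛmem x hx), hΛright x hx, sub_zero] at h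
      rwa [div_mul_eq_mul_div, div_le_iff₀' h2S]
    exact hgrowth.inv_tendsto_atTop.congr'
      ((eventually_gt_atTop 0).mono fun x hx => (hformula x hx).symm)

theorem stmt13
    (S : ℝ) (hS : 0 < S)
    (C Sg c s : ℝ → ℝ)
    (hC_lip : ∃ K : NNReal, LipschitzWith K C)
    (hSg_lip : ∃ K : NNReal, LipschitzWith K Sg)
    (hC_per : Function.Periodic C (2 * S))
    (hSg_per : Function.Periodic Sg (2 * S))
    (hc_meas : Measurable c) (hs_meas : Measurable s)
    (hc_bdd : ∃ B : ℝ, ∀ θ, |c θ| ≤ B) (hs_bdd : ∃ B : ℝ, ∀ θ, |s θ| ≤ B)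
    (hconv : ∀ᵐ θ ∂(volume : Measure ℝ), HasDerivAt C (-(s θ)) θ ∧ HasDerivAt Sg (c θ) θ ∧
      c θ * C θ + s θ * Sg θ = 1)
    (M : ℝ) (hM : IsGreatest (C '' Set.Icc 0 (2 * S)) M)
    (L F : ℝ → ℝ)
    (hL : ∀ l : ℝ, M < l → L l = ∫ θ in (0:ℝ)..(2*S), 1 / (l - C θ))
    (hF : ∀ l : ℝ, M < l → F l = ∫ θ in (0:ℝ)..(2*S), c θ / (l - C θ))
    (hM0 : 0 < M)
    (Λ : ℝ → ℝ)
    (hΛmem : ∀ x : ℝ, 0 < x → M < Λ x)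
    (hΛright : ∀ x : ℝ, 0 < x → L (Λ x) = x)
    (hΛleft : ∀ l : ℝ, M < l → Λ (L l) = l)
    (G : ℝ → ℝ) (hG : ∀ x : ℝ, 0 < x → G x = F (Λ x)) :
    (∀ x : ℝ, 0 < x → deriv (deriv G) x = -(deriv Λ x) / (Λ x) ^ 2) ∧
    Tendsto (deriv (deriv G)) (𝓝[>] (0:ℝ)) (𝓝 (1 / (2 * S))) ∧
    Tendsto (deriv (deriv G)) atTop (𝓝 0) :=
  stmt13_general S hS C Sg c s hC_lip hSg_lip hC_per hSg_per hc_meas hc_bdd hconv M hM L F hL hF hM0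
    Λ hΛmem hΛright hΛleft G hG
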